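/- arXiv:1310.6293 — 6 statements merged into one kernel-verified Lean document; each statement's English description precedes it below -/
import Mathlib

section
/- Let p be a prime element of ℤ[i]. There exist Gaussian integers x, y, z with x and y coprime (IsCoprime x y) such that x² + i·y² = p·z if and only if N(p) ≡ 1 (mod 8) or p is associated to 1 + i. -/
/-! For `p ∤ 2` the quotient `ℤ[i]/(p)` is a finite field `F` of odd order `N(p)`. A coprime
solution has `y` invertible mod `p`, so solvability amounts to `-i` being a square in `F`
(conversely take `y = 1`). As `-i` has order `4` in the cyclic group `Fˣ` of order `N(p) - 1`,
it is a square exactly when `8 ∣ N(p) - 1`. The prime `1 + i` divides `1² + i·1²`. -/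

open Zsqrtd

namespace Zsqrtd

variable {d : ℤ}

noncomputable def basisOneSqrtd (d : ℤ) : Module.Basis (Fin 2) ℤ (ℤ√d) :=
  Module.Basis.ofEquivFun
    { toFun := fun z => ![z.re, z.im]
      invFun := fun f => ⟨f 0, f 1⟩
      map_add' := fun a b => by ext j; fin_cases j <;> simp
      map_smul' := fun n a => by ext j; fin_cases j <;> simp [zsmul_eq_mul]
      left_inv := fun z => by simp
      right_inv := fun f => by ext j; fin_cases j <;> simp }

instance : Module.Free ℤ (ℤ√d) := .of_basis (basisOneSqrtd d)

instance : Module.Finite ℤ (ℤ√d) := .of_basis (basisOneSqrtd d)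

theorem algebraNorm_eq_norm (z : ℤ√d) : Algebra.norm ℤ z = z.norm := by
  rw [Algebra.norm_eq_matrix_det (basisOneSqrtd d), Matrix.det_fin_two]
  simp [basisOneSqrtd, Algebra.leftMulMatrix_eq_repr_mul, Zsqrtd.norm_def]

theorem irreducible_of_prime_natAbs_norm {z : ℤ√d} (hz : z.norm.natAbs.Prime) :
    Irreducible z where
  not_isUnit h := hz.ne_one (norm_eq_one_iff.mpr h)
  isUnit_or_isUnit a b hab := by
    rw [hab, norm_mul, Int.natAbs_mul, Nat.prime_mul_iff] at hz
    rcases hz with ⟨-, hb⟩ | ⟨-, ha⟩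
    · exact .inr (norm_eq_one_iff.mp hb)
    · exact .inl (norm_eq_one_iff.mp ha)

end Zsqrtd

theorem orderOf_eq_four_of_sq_eq_neg_one {R : Type*} [Ring R] {x : R} (hx : x ^ 2 = -1)
    (h : (-1 : R) ≠ 1) : orderOf x = 4 :=
  orderOf_eq_prime_pow (p := 2) (n := 1) (by rwa [pow_one, hx])
    (by rw [show 2 ^ (1 + 1) = 2 * 2 from rfl, pow_mul, hx, neg_one_sq])

theorem FiniteField.isSquare_iff_card_modEq_one_eight {K : Type*} [Field K] [Fintype K]
    (hK : ringChar K ≠ 2) {ι : K} (hι : ι ^ 2 = -1) :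
    IsSquare ι ↔ Fintype.card K ≡ 1 [MOD 8] := by
  have hι0 : ι ≠ 0 := by rintro rfl; simp at hι
  have hodd := FiniteField.odd_card_of_char_ne_two hK
  rw [FiniteField.isSquare_iff hK hι0, ← orderOf_dvd_iff_pow_eq_one,
    orderOf_eq_four_of_sq_eq_neg_one hι (Ring.neg_one_ne_one_of_char_ne_two hK), Nat.ModEq]
  omega

theorem exists_coprime_sq_add_mul_sq_eq_mul_iff {R : Type*} [CommRing R] [IsDomain R]
    [IsPrincipalIdealRing R] {p : R} (hp : Prime p) (c : R) :
    (∃ x y z : R, IsCoprime x y ∧ x ^ 2 + c * y ^ 2 = p * z) ↔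
      IsSquare (-Ideal.Quotient.mk (Ideal.span {p}) c) := by
  set π := Ideal.Quotient.mk (Ideal.span {p})
  have := PrincipalIdealRing.isMaximal_of_irreducible hp.irreducible
  let := Ideal.Quotient.field (Ideal.span {p})
  constructor
  · rintro ⟨x, y, z, hxy, hxyz⟩
    have hmod : π x ^ 2 + π c * π y ^ 2 = 0 := by
      simpa [π, Ideal.Quotient.eq_zero_iff_dvd] using congrArg π hxyz
    have hy : π y ≠ 0 := by
      intro hy
      rw [hy, zero_pow two_ne_zero, mul_zero, add_zero, ← map_pow,
        Ideal.Quotient.eq_zero_iff_dvd] at hmod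
      rw [Ideal.Quotient.eq_zero_iff_dvd] at hy
      exact hp.not_isUnit (hxy.isUnit_of_dvd' (hp.dvd_of_dvd_pow hmod) hy)
    refine ⟨π x / π y, ?_⟩
    field_simp
    linear_combination -hmod
  · rintro ⟨a, ha⟩
    obtain ⟨x, rfl⟩ := Ideal.Quotient.mk_surjective a
    obtain ⟨z, hz⟩ : p ∣ x ^ 2 + c := by
      rw [← Ideal.Quotient.eq_zero_iff_dvd, map_add, map_pow]
      linear_combination -ha
    exact ⟨x, 1, z, isCoprime_one_right, by rw [one_pow, mul_one, hz]⟩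

namespace GaussianInt

theorem natCard_quotient_span_singleton (p : GaussianInt) :
    Nat.card (GaussianInt ⧸ Ideal.span {p}) = p.norm.natAbs := by
  rw [← Submodule.cardQuot_apply, ← Ideal.absNorm_apply, Ideal.absNorm_span_singleton,
    algebraNorm_eq_norm]

theorem prime_one_add_i : Prime (⟨1, 1⟩ : GaussianInt) :=
  (irreducible_of_prime_natAbs_norm (by decide)).prime

theorem two_eq_neg_i_mul_one_add_i_sq : (2 : GaussianInt) = -⟨0, 1⟩ * ⟨1, 1⟩ ^ 2 := by
  decide

theorem dvd_two_iff_associated_one_add_i {p : GaussianInt} (hp : Prime p) :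
    p ∣ 2 ↔ Associated p ⟨1, 1⟩ := by
  refine ⟨fun h => ?_, fun h => h.dvd.trans ⟨-⟨0, 1⟩ * ⟨1, 1⟩, by decide⟩⟩
  rw [two_eq_neg_i_mul_one_add_i_sq] at h
  have hi : IsUnit (-⟨0, 1⟩ : GaussianInt) := norm_eq_one_iff.mp (by decide)
  refine hp.irreducible.associated_of_dvd prime_one_add_i.irreducible (hp.dvd_of_dvd_pow (n := 2) ?_)
  exact (hp.dvd_or_dvd h).resolve_left fun h' => hp.not_isUnit (isUnit_of_dvd_unit h' hi)

theorem isSquare_neg_i_quotient_iff {p : GaussianInt} (hp : Prime p) (h2 : ¬p ∣ 2) :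
    IsSquare (-Ideal.Quotient.mk (Ideal.span {p}) ⟨0, 1⟩) ↔ p.norm ≡ 1 [ZMOD 8] := by
  have := PrincipalIdealRing.isMaximal_of_irreducible hp.irreducible
  let := Ideal.Quotient.field (Ideal.span {p})
  have : Finite (GaussianInt ⧸ Ideal.span {p}) :=
    Ideal.finiteQuotientOfFreeOfNeBot _ (by simpa using hp.ne_zero)
  let := Fintype.ofFinite (GaussianInt ⧸ Ideal.span {p})
  have hK : ringChar (GaussianInt ⧸ Ideal.span {p}) ≠ 2 := fun h => by
    apply h2
    rw [← Ideal.Quotient.eq_zero_iff_dvd, map_ofNat]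
    exact_mod_cast h ▸ ringChar.Nat.cast_ringChar
  have hcard : (Fintype.card (GaussianInt ⧸ Ideal.span {p}) : ℤ) = p.norm := by
    rw [← Nat.card_eq_fintype_card, natCard_quotient_span_singleton, abs_natCast_norm]
  rw [FiniteField.isSquare_iff_card_modEq_one_eight hK, ← hcard]
  · exact_mod_cast Int.natCast_modEq_iff.symm
  · rw [neg_sq, ← map_pow, show (⟨0, 1⟩ : GaussianInt) ^ 2 = -1 by decide, map_neg, map_one]

end GaussianInt

/-- For a Gaussian prime `p`, the equation `x² + i·y² = p·z` with `x, y` coprime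
is solvable iff `N(p) ≡ 1 (mod 8)` or `p` is associated to `1 + i`. -/
theorem stmt_2 (p : GaussianInt) (hp : Prime p) :
    (∃ x y z : GaussianInt, IsCoprime x y ∧
        x ^ 2 + (⟨0, 1⟩ : GaussianInt) * y ^ 2 = p * z) ↔
      (p.norm ≡ 1 [ZMOD 8] ∨ Associated p ⟨1, 1⟩) := by
  by_cases h1i : Associated p ⟨1, 1⟩
  · obtain ⟨z, hz⟩ := h1i.dvd
    simp only [h1i, or_true, iff_true]
    exact ⟨1, 1, z, isCoprime_one_left, by rw [← hz]; decide⟩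
  · rw [or_iff_left h1i, exists_coprime_sq_add_mul_sq_eq_mul_iff hp,
      GaussianInt.isSquare_neg_i_quotient_iff hp
        ((GaussianInt.dvd_two_iff_associated_one_add_i hp).not.mpr h1i)]
end

section
/- Let p be a prime element of ℤ[i] with N(p) ≡ 1 (mod 8). Then there exist Gaussian integers x₀, y₀, z₀ with x₀ and y₀ coprime (IsCoprime x₀ y₀), z₀ ≠ 0, x₀² + i·y₀² = p·z₀, and N(z₀) < N(p) (so that every prime factor of z₀ has norm strictly smaller than N(p)). -/
/-!
The quotient `ℤ[i] ⧸ (p)` is a finite field with `N(p)` elements, and `-i` is a fourth root of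
unity in it; since `8 ∣ N(p) - 1`, Euler's criterion makes every fourth root of unity a square, so
`p ∣ x² + i` for some `x`. Replacing `x` by its remainder `r` modulo `p` gives `N(r) ≤ N(p) / 2`,
hence `N(r² + i) ≤ (N(r) + 1)² < N(p)²`, and `(x₀, y₀) = (r, 1)` works.
-/

local notation "ℤ[i]" => GaussianInt

theorem FiniteField.isSquare_of_pow_four_eq_one {F : Type*} [Field F] [Fintype F]
    (hF : Fintype.card F % 8 = 1) {a : F} (ha : a ^ 4 = 1) : IsSquare a := by
  have hchar : ringChar F ≠ 2 := by rw [Ne, FiniteField.even_card_iff_char_two]; omega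
  rw [FiniteField.isSquare_iff hchar (by rintro rfl; simp at ha)]
  obtain ⟨k, hk⟩ : ∃ k, Fintype.card F / 2 = 4 * k := ⟨Fintype.card F / 8, by omega⟩
  rw [hk, pow_mul, ha, one_pow]

namespace GaussianInt

@[simps]
def equivFinTwo : ℤ[i] ≃ₗ[ℤ] Fin 2 → ℤ where
  toFun z := ![z.re, z.im]
  invFun v := ⟨v 0, v 1⟩
  map_add' z w := by ext i; fin_cases i <;> rfl
  map_smul' c z := by ext i; fin_cases i <;> simp
  left_inv z := rfl
  right_inv v := by ext i; fin_cases i <;> rfl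

noncomputable def basisOneI : Module.Basis (Fin 2) ℤ ℤ[i] := .ofEquivFun equivFinTwo

theorem algebraNorm_eq_norm (z : ℤ[i]) : Algebra.norm ℤ z = z.norm := by
  rw [Algebra.norm_eq_matrix_det basisOneI, Matrix.det_fin_two]
  simp [Algebra.leftMulMatrix_eq_repr_mul, basisOneI, Zsqrtd.norm_def]

instance : Module.Free ℤ ℤ[i] := .of_basis basisOneI
instance : Module.Finite ℤ ℤ[i] := .of_basis basisOneI

theorem natCard_quotient_span_singleton_s4 (z : ℤ[i]) :
    Nat.card (ℤ[i] ⧸ Ideal.span {z}) = z.norm.natAbs := by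
  rw [← Submodule.cardQuot_apply, ← Ideal.absNorm_apply, Ideal.absNorm_span_singleton,
    algebraNorm_eq_norm]

theorem normSq_div_sub_div_le_half (x y : ℤ[i]) :
    Complex.normSq ((x / y : ℂ) - ((x / y : ℤ[i]) : ℂ)) ≤ 1 / 2 := by
  have hre := abs_le.1 (abs_sub_round (x / y : ℂ).re)
  have him := abs_le.1 (abs_sub_round (x / y : ℂ).im)
  rw [Complex.normSq_apply]
  simp only [Complex.sub_re, Complex.sub_im, toComplex_re_div, toComplex_im_div]
  nlinarith

theorem two_mul_norm_mod_le (x : ℤ[i]) {y : ℤ[i]} (hy : y ≠ 0) : 2 * (x % y).norm ≤ y.norm := by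
  have hy' : (y : ℂ) ≠ 0 := toComplex_eq_zero.not.2 hy
  have key : ((x % y).norm : ℝ) =
      Complex.normSq (y : ℂ) * Complex.normSq ((x / y : ℂ) - ((x / y : ℤ[i]) : ℂ)) := by
    rw [intCast_real_norm, mod_def, toComplex_sub, toComplex_mul, ← Complex.normSq_mul, mul_sub,
      mul_div_cancel₀ _ hy']
  have hδ := normSq_div_sub_div_le_half x y
  have : (2 * (x % y).norm : ℝ) ≤ y.norm := by
    rw [key, intCast_real_norm y]
    nlinarith [Complex.normSq_nonneg (y : ℂ)]
  exact_mod_cast this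

theorem norm_sq_add_I_le (r : ℤ[i]) : (r ^ 2 + (⟨0, 1⟩ : ℤ[i])).norm ≤ (r.norm + 1) ^ 2 := by
  simp only [Zsqrtd.norm_def, sq, Zsqrtd.re_add, Zsqrtd.im_add, Zsqrtd.re_mul, Zsqrtd.im_mul]
  nlinarith [sq_nonneg (r.re - r.im)]

theorem sq_add_I_ne_zero (r : ℤ[i]) : r ^ 2 + (⟨0, 1⟩ : ℤ[i]) ≠ 0 := by
  intro h
  have him := congrArg Zsqrtd.im h
  simp only [sq, Zsqrtd.im_add, Zsqrtd.im_mul, Zsqrtd.im_zero] at him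
  have : 2 * (r.re * r.im) + 1 = 0 := by linarith
  omega

theorem exists_dvd_sq_add_I {p : ℤ[i]} (hp : Prime p) (h8 : p.norm % 8 = 1) :
    ∃ x : ℤ[i], p ∣ x ^ 2 + ⟨0, 1⟩ := by
  have : (Ideal.span {p}).IsMaximal :=
    ((Ideal.span_singleton_prime hp.ne_zero).2 hp).isMaximal (by simpa using hp.ne_zero)
  let : Field (ℤ[i] ⧸ Ideal.span {p}) := Ideal.Quotient.field _
  have hcard := natCard_quotient_span_singleton_s4 p
  have : Finite (ℤ[i] ⧸ Ideal.span {p}) := Nat.finite_of_card_ne_zero (by omega)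
  let : Fintype (ℤ[i] ⧸ Ideal.span {p}) := .ofFinite _
  have hcard8 : Fintype.card (ℤ[i] ⧸ Ideal.span {p}) % 8 = 1 := by
    rw [← Nat.card_eq_fintype_card, hcard]
    have := abs_natCast_norm p
    omega
  set i := Ideal.Quotient.mk (Ideal.span {p}) ⟨0, 1⟩
  have hi : i ^ 2 = -1 := by
    rw [← map_pow, show (⟨0, 1⟩ : ℤ[i]) ^ 2 = -1 from rfl, map_neg, map_one]
  obtain ⟨y, hy⟩ := FiniteField.isSquare_of_pow_four_eq_one hcard8 (a := -i)
    (by linear_combination (i ^ 2 - 1) * hi)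
  obtain ⟨x, rfl⟩ := Ideal.Quotient.mk_surjective y
  refine ⟨x, Ideal.mem_span_singleton.1 (Ideal.Quotient.eq_zero_iff_mem.1 ?_)⟩
  rw [map_add, map_pow, sq, ← hy, neg_add_cancel]

theorem exists_sq_add_I_eq_mul {p x : ℤ[i]} (hp : 2 < p.norm) (hx : p ∣ x ^ 2 + ⟨0, 1⟩) :
    ∃ r z : ℤ[i], r ^ 2 + ⟨0, 1⟩ = p * z ∧ z ≠ 0 ∧ z.norm < p.norm := by
  have hp0 : p ≠ 0 := by rintro rfl; simp at hp
  set r := x % p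
  obtain ⟨z, hz⟩ : p ∣ r ^ 2 + ⟨0, 1⟩ := by
    have : r ^ 2 + ⟨0, 1⟩ = x ^ 2 + ⟨0, 1⟩ - p * ((x / p) * (x + r)) := by
      rw [show r = x - p * (x / p) from mod_def x p]; ring
    rw [this]
    exact dvd_sub hx (dvd_mul_right _ _)
  refine ⟨r, z, hz, right_ne_zero_of_mul (hz ▸ sq_add_I_ne_zero r), ?_⟩
  have hr := two_mul_norm_mod_le x hp0
  have hle := norm_sq_add_I_le r
  rw [hz, Zsqrtd.norm_mul] at hle
  nlinarith [norm_nonneg r]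

end GaussianInt

/-- For a Gaussian prime `p` with `N(p) ≡ 1 (mod 8)`, the equation
`x² + i·y² = p·z` has a solution with `x, y` coprime, `z ≠ 0`, and `N(z) < N(p)`. -/
theorem stmt_4 (p : GaussianInt) (hp : Prime p) (h : p.norm ≡ 1 [ZMOD 8]) :
    ∃ x₀ y₀ z₀ : GaussianInt, IsCoprime x₀ y₀ ∧ z₀ ≠ 0 ∧
      x₀ ^ 2 + (⟨0, 1⟩ : GaussianInt) * y₀ ^ 2 = p * z₀ ∧ z₀.norm < p.norm := by
  have h8 : p.norm % 8 = 1 := h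
  have hp2 : 2 < p.norm := by
    have := GaussianInt.norm_nonneg p
    have : p.norm ≠ 1 := fun h1 => hp.not_isUnit (Zsqrtd.norm_eq_one_iff.1 (by simp [h1]))
    omega
  obtain ⟨x, hx⟩ := GaussianInt.exists_dvd_sq_add_I hp h8
  obtain ⟨r, z, hrz, hz, hzp⟩ := GaussianInt.exists_sq_add_I_eq_mul hp2 hx
  exact ⟨r, 1, z, isCoprime_one_right, hz, by rwa [one_pow, mul_one], hzp⟩
end

section
/- (Niven–Mordell theorem) Let a and b be rational integers. There exist Gaussian integers x and y with x² + y² = a + 2·b·i if and only if it is not the case that both a ≡ 2 (mod 4) and b is odd. -/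
lemma aux4_stmt_6 : ∀ P Q R S : ZMod 4,
    P*P - Q*Q + (R*R - S*S) = 2 →
    (ZMod.castHom (by norm_num : (2:ℕ) ∣ 4) (ZMod 2)) (P*Q + R*S) ≠ 1 := by decide

/-- (Niven–Mordell) For rational integers `a, b`, the equation `x² + y² = a + 2bi`
is solvable in Gaussian integers iff not both `a ≡ 2 (mod 4)` and `b` odd. -/
theorem stmt_6 (a b : ℤ) :
    (∃ x y : GaussianInt,
        x ^ 2 + y ^ 2 = (a : GaussianInt) + 2 * (b : GaussianInt) * ⟨0, 1⟩) ↔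
      ¬ (a ≡ 2 [ZMOD 4] ∧ Odd b) := by
  constructor
  · rintro ⟨x, y, h⟩ ⟨ha, hb⟩
    have h1 := congrArg Zsqrtd.re h
    have h2 := congrArg Zsqrtd.im h
    simp [pow_two, Zsqrtd.re_mul, Zsqrtd.im_mul] at h1 h2
    set p := x.re; set q := x.im; set r := y.re; set s := y.im
    have h1' : p*p - q*q + (r*r - s*s) = a := by linarith
    have h2' : p*q + r*s = b := by linarith
    refine aux4_stmt_6 (p : ZMod 4) q r s ?_ ?_
    · have : ((p*p - q*q + (r*r - s*s) : ℤ) : ZMod 4) = ((a : ℤ) : ZMod 4) := by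
        exact_mod_cast congrArg (Int.cast : ℤ → ZMod 4) h1'
      have ha4 : ((a : ℤ) : ZMod 4) = ((2 : ℤ) : ZMod 4) :=
        (ZMod.intCast_eq_intCast_iff _ _ _).mpr ha
      push_cast at this
      rw [this, ha4]; norm_num
    · have key : ((p : ZMod 4)*(q : ZMod 4) + (r : ZMod 4)*(s : ZMod 4))
          = ((b : ℤ) : ZMod 4) := by
        rw [← h2']; push_cast; ring
      rw [key, ZMod.castHom_apply,
        ZMod.cast_intCast (by norm_num : (2:ℕ) ∣ 4) b]
      obtain ⟨t, ht⟩ := hb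
      subst ht; push_cast
      simp
      left; decide
  · intro h
    have h' : ¬ (a % 4 = 2 % 4 ∧ b % 2 = 1) := by
      simpa [Int.ModEq, Int.odd_iff] using h
    rcases Int.even_or_odd a with ⟨c, hc⟩ | ⟨k, hk⟩
    · -- a even, a = c + c
      rcases Int.even_or_odd (b + c) with hbc | ⟨m, hm⟩
      · -- b + c even ⇒ b, c both even (else a ≡ 2 mod 4 and b odd)
        obtain ⟨t, ht⟩ := hbc
        have hb2 : b % 2 = 0 := by
          rcases Int.even_or_odd b with ⟨u, hu⟩ | ⟨u, hu⟩
          · omega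
          · exfalso; exact h' ⟨by omega, by omega⟩
        obtain ⟨l, hl⟩ : ∃ l, b = 2*l := ⟨b/2, by omega⟩
        obtain ⟨k, hk⟩ : ∃ k, c = 2*k := by
          exact ⟨t - l, by omega⟩
        refine ⟨⟨k+1, l⟩, ⟨-l, k-1⟩, ?_⟩
        rw [Zsqrtd.ext_iff]
        simp [pow_two, Zsqrtd.re_mul, Zsqrtd.im_mul]
        constructor <;> · subst hc hl hk; ring
      · -- b + c odd, b + c = 2m+1
        refine ⟨⟨m+1, m+1-c⟩, ⟨m-c, -m⟩, ?_⟩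
        rw [Zsqrtd.ext_iff]
        simp [pow_two, Zsqrtd.re_mul, Zsqrtd.im_mul]
        constructor <;> nlinarith [hm, hc]
    · -- a odd, a = 2k+1
      refine ⟨⟨k+1, b⟩, ⟨-b, k⟩, ?_⟩
      rw [Zsqrtd.ext_iff]
      simp [pow_two, Zsqrtd.re_mul, Zsqrtd.im_mul]
      constructor <;> · subst hk; ring
end

section
/- Let p be a prime element of ℤ[i] with N(p) ≡ 5 (mod 8). Then there exist Gaussian integers x₀ and y₀ such that p = x₀² + y₀² or p = i·(x₀² + y₀²). -/
/-- Every Gaussian prime `p` with `N(p) ≡ 5 (mod 8)` is of the form `x₀² + y₀²`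
or `i·(x₀² + y₀²)`. -/
theorem stmt_7 (p : GaussianInt) (hp : Prime p) (h : p.norm ≡ 5 [ZMOD 8]) :
    ∃ x₀ y₀ : GaussianInt,
      p = x₀ ^ 2 + y₀ ^ 2 ∨ p = (⟨0, 1⟩ : GaussianInt) * (x₀ ^ 2 + y₀ ^ 2) := by
  set a := p.re with ha
  set b := p.im with hb
  have hnorm : p.norm = a * a + b * b := by
    rw [Zsqrtd.norm_def]; ring
  have h8 : p.norm % 8 = 5 := by
    have := (Int.ModEq.sub h (Int.ModEq.refl 5)).dvd
    omega
  have hodd : (a * a + b * b) % 2 = 1 := by omega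
  have hsq : ∀ x : ℤ, x * x % 2 = x % 2 := by
    intro x
    rcases Int.even_or_odd x with ⟨k, hk⟩ | ⟨k, hk⟩ <;> subst hk <;> ring_nf <;> omega
  have hab : a % 2 + b % 2 = 1 := by
    have h1 := hsq a
    have h2 := hsq b
    have := Int.add_mul_emod_self_left
    have h3 : (a * a + b * b) % 2 = (a * a % 2 + b * b % 2) % 2 := Int.add_emod _ _ _
    have h4 := Int.emod_emod_of_dvd a (dvd_refl 2)
    omega
  rcases Int.even_or_odd a with ⟨k, hk⟩ | ⟨k, hk⟩
  · -- a even, b odd : p = i * (x² + y²)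
    have hbodd : b % 2 = 1 := by omega
    obtain ⟨m, hm⟩ : ∃ m, b = 2 * m + 1 := ⟨b / 2, by omega⟩
    refine ⟨⟨m + 1, -k⟩, ⟨-k, -m⟩, Or.inr ?_⟩
    ext <;> simp [Zsqrtd.re_mul, Zsqrtd.im_mul, pow_two, ha, hb] <;>
      [skip; skip] <;> nlinarith [hk, hm]
  · -- a odd, b even : p = x² + y²
    obtain ⟨m, hm⟩ : ∃ m, b = 2 * m := by
      have : b % 2 = 0 := by omega
      exact ⟨b / 2, by omega⟩
    refine ⟨⟨k + 1, m⟩, ⟨m, -k⟩, Or.inl ?_⟩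
    ext <;> simp [Zsqrtd.re_mul, Zsqrtd.im_mul, pow_two, ha, hb] <;> nlinarith [hk, hm]
end

section
/- The set of Gaussian integers representable by the form x² + i·y² + z² + i·w² is closed under multiplication: if a = x₁² + i·y₁² + z₁² + i·w₁² and b = x₂² + i·y₂² + z₂² + i·w₂² for some Gaussian integers x₁, y₁, z₁, w₁, x₂, y₂, z₂, w₂, then there exist Gaussian integers X, Y, Z, W with a·b = X² + i·Y² + Z² + i·W². -/
/-- The set of Gaussian integers represented by `x² + i·y² + z² + i·w²`
is closed under multiplication. -/
theorem stmt_10 (a b : GaussianInt)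
    (ha : ∃ x₁ y₁ z₁ w₁ : GaussianInt,
      a = x₁ ^ 2 + (⟨0, 1⟩ : GaussianInt) * y₁ ^ 2 + z₁ ^ 2 + (⟨0, 1⟩ : GaussianInt) * w₁ ^ 2)
    (hb : ∃ x₂ y₂ z₂ w₂ : GaussianInt,
      b = x₂ ^ 2 + (⟨0, 1⟩ : GaussianInt) * y₂ ^ 2 + z₂ ^ 2 + (⟨0, 1⟩ : GaussianInt) * w₂ ^ 2) :
    ∃ X Y Z W : GaussianInt,
      a * b = X ^ 2 + (⟨0, 1⟩ : GaussianInt) * Y ^ 2 + Z ^ 2 + (⟨0, 1⟩ : GaussianInt) * W ^ 2 := by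
  obtain ⟨x₁, y₁, z₁, w₁, rfl⟩ := ha
  obtain ⟨x₂, y₂, z₂, w₂, rfl⟩ := hb
  set I : GaussianInt := ⟨0, 1⟩ with hI
  refine ⟨x₁*x₂ - z₁*z₂ - I*y₁*y₂ - I*w₁*w₂,
          x₁*y₂ - z₁*w₂ + y₁*x₂ + w₁*z₂,
          x₁*z₂ + z₁*x₂ + I*y₁*w₂ - I*w₁*y₂,
          x₁*w₂ + z₁*y₂ - y₁*z₂ + w₁*x₂, ?_⟩
  ring
end

section
/- Let p' be a prime element of ℤ[i], and let x₀, y₀, x₀', y₀' be Gaussian integers such that p' divides x₀² + i·y₀² and p' divides x₀'² + i·y₀'². Then p' divides x₀·x₀' + i·y₀·y₀' or p' divides x₀·x₀' - i·y₀·y₀'. -/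
/-- If a Gaussian prime `p'` divides both `x₀² + i·y₀²` and `x₀'² + i·y₀'²`,
then it divides `x₀·x₀' + i·y₀·y₀'` or `x₀·x₀' - i·y₀·y₀'`. -/
theorem stmt_14 (p' x₀ y₀ x₀' y₀' : GaussianInt) (hp : Prime p')
    (h₁ : p' ∣ x₀ ^ 2 + (⟨0, 1⟩ : GaussianInt) * y₀ ^ 2)
    (h₂ : p' ∣ x₀' ^ 2 + (⟨0, 1⟩ : GaussianInt) * y₀' ^ 2) :
    p' ∣ x₀ * x₀' + (⟨0, 1⟩ : GaussianInt) * y₀ * y₀' ∨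
      p' ∣ x₀ * x₀' - (⟨0, 1⟩ : GaussianInt) * y₀ * y₀' := by
  apply hp.dvd_or_dvd
  have key : (x₀ * x₀' + (⟨0, 1⟩ : GaussianInt) * y₀ * y₀') *
      (x₀ * x₀' - (⟨0, 1⟩ : GaussianInt) * y₀ * y₀') =
      x₀' ^ 2 * (x₀ ^ 2 + (⟨0, 1⟩ : GaussianInt) * y₀ ^ 2) -
      (⟨0, 1⟩ : GaussianInt) * y₀ ^ 2 * (x₀' ^ 2 + (⟨0, 1⟩ : GaussianInt) * y₀' ^ 2) := by
    ring_nf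
  rw [key]
  exact dvd_sub (Dvd.dvd.mul_left h₁ _) (Dvd.dvd.mul_left h₂ _)
end
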